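/- arXiv:0806.2718 — 4 statements merged into one kernel-verified Lean document; each statement's English description precedes it below -/
import Mathlib

section
/- Let U be a standard normal random variable and R⁺ an independent Rayleigh-distributed random variable (density f(r) = r·e^{-r²/2} for r > 0). Then for any a > 0, b ∈ ℝ and any x ∈ ℝ, P(aU + bR⁺ > x) = Φ(-x/a) + e^{-x²/(2σ²)} · (b/σ) · Φ(bx/(σa)), where σ = √(a² + b²) and Φ is the standard normal CDF. -/
/-!
Since `r e^{-r²/2} = -(e^{-r²/2})'`, integrating by parts turns the left side into
`Φ(-x/a) + (b/a) ∫₀^∞ e^{-r²/2} φ((br - x)/a) dr`. Completing the square in the exponent gives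
`e^{-r²/2} φ((br - x)/a) = e^{-x²/(2σ²)} φ(σr/a - bx/(σa))` with `σ = √(a² + b²)`, and the
remaining Gaussian integral over `(0, ∞)` equals `(a/σ) Φ(bx/(σa))`.
-/

open MeasureTheory Real Set Filter Topology

/-- The standard normal cumulative distribution function Φ. -/
noncomputable def stdNormalCDF (x : ℝ) : ℝ :=
  ∫ t in Set.Iic x, (Real.sqrt (2 * Real.pi))⁻¹ * Real.exp (-t ^ 2 / 2)

noncomputable def stdNormalPDF (t : ℝ) : ℝ := (Real.sqrt (2 * π))⁻¹ * exp (-t ^ 2 / 2)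

lemma stdNormalCDF_eq_integral_stdNormalPDF (y : ℝ) :
    stdNormalCDF y = ∫ t in Iic y, stdNormalPDF t := rfl

lemma continuous_stdNormalPDF : Continuous stdNormalPDF := by
  unfold stdNormalPDF; fun_prop

lemma stdNormalPDF_nonneg (t : ℝ) : 0 ≤ stdNormalPDF t := by
  unfold stdNormalPDF; positivity

lemma stdNormalPDF_le (t : ℝ) : stdNormalPDF t ≤ (Real.sqrt (2 * π))⁻¹ := by
  unfold stdNormalPDF
  exact mul_le_of_le_one_right (by positivity) (exp_le_one_iff.2 (by nlinarith [sq_nonneg t]))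

lemma integrable_exp_neg_sq_div_two : Integrable fun t : ℝ ↦ exp (-t ^ 2 / 2) := by
  simpa [div_eq_inv_mul] using integrable_exp_neg_mul_sq (by norm_num : (0 : ℝ) < 1 / 2)

lemma integrable_mul_exp_neg_sq_div_two : Integrable fun t : ℝ ↦ t * exp (-t ^ 2 / 2) := by
  simpa [div_eq_inv_mul] using integrable_mul_exp_neg_mul_sq (by norm_num : (0 : ℝ) < 1 / 2)

lemma integrable_stdNormalPDF : Integrable stdNormalPDF :=
  integrable_exp_neg_sq_div_two.const_mul _

lemma integral_stdNormalPDF : ∫ t, stdNormalPDF t = 1 := by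
  have hgauss : ∫ t : ℝ, exp (-t ^ 2 / 2) = Real.sqrt (2 * π) := by
    simpa [div_eq_inv_mul, mul_comm] using integral_gaussian (1 / 2)
  simp only [stdNormalPDF]
  rw [integral_const_mul, hgauss, inv_mul_cancel₀ (by positivity)]

lemma stdNormalCDF_nonneg (y : ℝ) : 0 ≤ stdNormalCDF y :=
  setIntegral_nonneg measurableSet_Iic fun t _ ↦ stdNormalPDF_nonneg t

lemma stdNormalCDF_le_one (y : ℝ) : stdNormalCDF y ≤ 1 :=
  integral_stdNormalPDF ▸ setIntegral_le_integral integrable_stdNormalPDF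
    (ae_of_all _ stdNormalPDF_nonneg)

lemma norm_stdNormalCDF_le_one (y : ℝ) : ‖stdNormalCDF y‖ ≤ 1 := by
  rw [norm_of_nonneg (stdNormalCDF_nonneg y)]; exact stdNormalCDF_le_one y

lemma hasDerivAt_stdNormalCDF (y : ℝ) : HasDerivAt stdNormalCDF (stdNormalPDF y) y := by
  have hsplit : ∀ z, stdNormalCDF z = stdNormalCDF 0 + ∫ t in (0 : ℝ)..z, stdNormalPDF t := by
    intro z
    rw [← intervalIntegral.integral_Iic_sub_Iic integrable_stdNormalPDF.integrableOn
      integrable_stdNormalPDF.integrableOn]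
    exact (add_sub_cancel _ _).symm
  rw [funext hsplit]
  exact ((continuous_stdNormalPDF.integral_hasStrictDerivAt 0 y).hasDerivAt).const_add _

lemma stdNormalCDF_neg (y : ℝ) : stdNormalCDF (-y) = ∫ t in Ioi y, stdNormalPDF t := by
  rw [stdNormalCDF_eq_integral_stdNormalPDF, ← integral_comp_neg_Ioi]
  simp [stdNormalPDF]

lemma integral_Ioi_stdNormalPDF_mul_sub {k : ℝ} (hk : 0 < k) (c : ℝ) :
    ∫ r in Ioi 0, stdNormalPDF (k * r - c) = k⁻¹ * stdNormalCDF c := by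
  have hshift : ∫ u in Ioi 0, stdNormalPDF (u - c) = ∫ t in Ioi (-c), stdNormalPDF t := by
    have := (measurePreserving_sub_right volume c).setIntegral_preimage_emb
      (measurableEmbedding_subRight c) stdNormalPDF (Ioi (-c))
    simpa using this
  rw [integral_comp_mul_left_Ioi (fun u ↦ stdNormalPDF (u - c)) 0 hk, mul_zero, hshift,
    ← stdNormalCDF_neg, neg_neg, smul_eq_mul]

lemma exp_neg_sq_div_two_mul_stdNormalPDF {a : ℝ} (ha : a ≠ 0) (b x r : ℝ) :
    exp (-r ^ 2 / 2) * stdNormalPDF ((b * r - x) / a) =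
      exp (-x ^ 2 / (2 * Real.sqrt (a ^ 2 + b ^ 2) ^ 2)) *
        stdNormalPDF (Real.sqrt (a ^ 2 + b ^ 2) / a * r -
          b * x / (Real.sqrt (a ^ 2 + b ^ 2) * a)) := by
  set s := Real.sqrt (a ^ 2 + b ^ 2)
  have hs2 : s ^ 2 = a ^ 2 + b ^ 2 := sq_sqrt (by positivity)
  have hs : s ≠ 0 := Real.sqrt_ne_zero'.2 (by positivity)
  simp only [stdNormalPDF, mul_left_comm (exp _), ← exp_add]
  congr 2
  field_simp
  rw [hs2]
  ring

lemma tendsto_exp_neg_sq_div_two_atTop : Tendsto (fun r : ℝ ↦ exp (-r ^ 2 / 2)) atTop (𝓝 0) := by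
  refine tendsto_exp_atBot.comp ?_
  exact (tendsto_neg_atTop_atBot.comp (tendsto_pow_atTop two_ne_zero)).atBot_div_const two_pos

lemma hasDerivAt_exp_neg_sq_div_two (r : ℝ) :
    HasDerivAt (fun r : ℝ ↦ exp (-r ^ 2 / 2)) (-(r * exp (-r ^ 2 / 2))) r := by
  have hquad : HasDerivAt (fun r : ℝ ↦ -r ^ 2 / 2) (-r) r :=
    ((hasDerivAt_pow 2 r).fun_neg.div_const 2).congr_deriv (by ring)
  exact hquad.exp.congr_deriv (by ring)

lemma integral_Ioi_mul_exp_neg_sq_div_two_mul {G G' : ℝ → ℝ} {C C' : ℝ}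
    (hG : ∀ r, HasDerivAt G (G' r) r) (hG_le : ∀ r, ‖G r‖ ≤ C)
    (hG' : Continuous G') (hG'_le : ∀ r, ‖G' r‖ ≤ C') :
    ∫ r in Ioi 0, r * exp (-r ^ 2 / 2) * G r =
      G 0 + ∫ r in Ioi 0, exp (-r ^ 2 / 2) * G' r := by
  have hG_cont : Continuous G := continuous_iff_continuousAt.2 fun r ↦ (hG r).continuousAt
  have hint : Integrable fun r ↦ r * exp (-r ^ 2 / 2) * G r :=
    integrable_mul_exp_neg_sq_div_two.mul_bdd hG_cont.aestronglyMeasurable (ae_of_all _ hG_le)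
  have hint' : Integrable fun r ↦ exp (-r ^ 2 / 2) * G' r :=
    integrable_exp_neg_sq_div_two.mul_bdd hG'.aestronglyMeasurable (ae_of_all _ hG'_le)
  have hderiv : ∀ r, HasDerivAt (fun r ↦ -(exp (-r ^ 2 / 2) * G r))
      (r * exp (-r ^ 2 / 2) * G r - exp (-r ^ 2 / 2) * G' r) r := fun r ↦
    ((hasDerivAt_exp_neg_sq_div_two r).fun_mul (hG r)).fun_neg.congr_deriv (by ring)
  have hlim : Tendsto (fun r ↦ -(exp (-r ^ 2 / 2) * G r)) atTop (𝓝 0) := by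
    simpa using (tendsto_exp_neg_sq_div_two_atTop.zero_mul_isBoundedUnder_le
      (isBoundedUnder_of ⟨C, fun r ↦ hG_le r⟩)).neg
  have hibp := integral_Ioi_of_hasDerivAt_of_tendsto (hderiv 0).continuousAt.continuousWithinAt
    (fun r _ ↦ hderiv r) (hint.sub hint').integrableOn hlim
  rw [integral_sub hint.integrableOn hint'.integrableOn] at hibp
  simp only [ne_eq, OfNat.ofNat_ne_zero, not_false_eq_true, zero_pow, neg_zero, zero_div,
    exp_zero, one_mul, sub_neg_eq_add, zero_add] at hibp
  linarith

/-- The probability `P(aU + bR⁺ > x)` is written by conditioning on `R⁺ = r`, so that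
`P(aU > x - br) = Φ((br - x)/a)`. -/
theorem stmt0 (a b x : ℝ) (ha : 0 < a) :
    (∫ r in Set.Ioi (0 : ℝ), r * Real.exp (-r ^ 2 / 2) * stdNormalCDF ((b * r - x) / a)) =
      stdNormalCDF (-x / a) +
        Real.exp (-x ^ 2 / (2 * Real.sqrt (a ^ 2 + b ^ 2) ^ 2)) *
          (b / Real.sqrt (a ^ 2 + b ^ 2)) *
          stdNormalCDF (b * x / (Real.sqrt (a ^ 2 + b ^ 2) * a)) := by
  have hderiv (r : ℝ) : HasDerivAt (fun r ↦ stdNormalCDF ((b * r - x) / a))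
      (b / a * stdNormalPDF ((b * r - x) / a)) r := by
    have hlin : HasDerivAt (fun r ↦ (b * r - x) / a) (b / a) r :=
      (((hasDerivAt_id r).const_mul b).sub_const x).div_const a |>.congr_deriv (by simp)
    exact ((hasDerivAt_stdNormalCDF _).comp r hlin).congr_deriv (mul_comm _ _)
  have hbound (r : ℝ) :
      ‖b / a * stdNormalPDF ((b * r - x) / a)‖ ≤ |b / a| * (Real.sqrt (2 * π))⁻¹ := by
    rw [norm_mul, norm_of_nonneg (stdNormalPDF_nonneg _), Real.norm_eq_abs]
    exact mul_le_mul_of_nonneg_left (stdNormalPDF_le _) (abs_nonneg _)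
  rw [integral_Ioi_mul_exp_neg_sq_div_two_mul hderiv (fun _ ↦ norm_stdNormalCDF_le_one _)
    (continuous_const.mul (continuous_stdNormalPDF.comp (by fun_prop))) hbound]
  have hs : 0 < Real.sqrt (a ^ 2 + b ^ 2) := Real.sqrt_pos.2 (by positivity)
  simp_rw [mul_left_comm (exp _), exp_neg_sq_div_two_mul_stdNormalPDF ha.ne']
  rw [integral_const_mul, integral_const_mul, integral_Ioi_stdNormalPDF_mul_sub (div_pos hs ha),
    mul_zero, zero_sub]
  field_simp
end

section
/- Let (X, Y) be zero-mean jointly Gaussian with Var(X) = σ_X², Var(Y) = σ_Y², and correlation ρ_{XY}. Then the probability measure A ↦ E[X⁺·1{Y ∈ A}]/E[X⁺] is the law of σ_Y(ρ_{XY}·R⁺ + √(1-ρ_{XY}²)·U), where R⁺ is Rayleigh (density r·e^{-r²/2}, r>0), U is standard normal, and R⁺, U are independent. -/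
/-!
With `u = x / σX`, the bivariate density factors, up to the constant `(σX σY √(1-ρ²))⁻¹`, as
`φ u · φ ((y / σY - ρ u) / √(1-ρ²))`: this is the regression `Y = σY (ρ u + √(1-ρ²) U)`.
After Fubini, the `y`-integral of the second factor is `Φ ((w / σY - ρ u) / √(1-ρ²))` over
`(-∞, w]` and `1` over `ℝ`. Substituting `x = σX r` turns the weight `x⁺ φ (x / σX)` into a
multiple of the Rayleigh density `r e^{-r²/2}`, whose total mass is `1`, and the constant cancels.
-/

open MeasureTheory Real Set

/-- The bivariate zero-mean Gaussian density with standard deviations `σX, σY` and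
correlation `ρ`. -/
noncomputable def bvnDensity (σX σY ρ x y : ℝ) : ℝ :=
  (2 * Real.pi * σX * σY * Real.sqrt (1 - ρ ^ 2))⁻¹ *
    Real.exp (-(x ^ 2 / σX ^ 2 - 2 * ρ * x * y / (σX * σY) + y ^ 2 / σY ^ 2) /
      (2 * (1 - ρ ^ 2)))

open ProbabilityTheory Filter Topology

lemma sqrt_one_sub_sq_pos {ρ : ℝ} (hρ : |ρ| < 1) : 0 < √(1 - ρ ^ 2) :=
  sqrt_pos.mpr (by nlinarith [sq_abs ρ, abs_nonneg ρ])

lemma gaussianPDFReal_zero_one (x : ℝ) :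
    gaussianPDFReal 0 1 x = (√(2 * π))⁻¹ * exp (-x ^ 2 / 2) := by
  simp [gaussianPDFReal]

lemma stdNormalCDF_eq_setIntegral_gaussianPDFReal (x : ℝ) :
    stdNormalCDF x = ∫ t in Iic x, gaussianPDFReal 0 1 t := by
  simp only [stdNormalCDF, gaussianPDFReal_zero_one]

lemma setIntegral_Iic_comp_div_sub {E : Type*} [NormedAddCommGroup E] [NormedSpace ℝ E]
    (g : ℝ → E) {a : ℝ} (ha : 0 < a) (b w : ℝ) :
    ∫ y in Iic w, g (y / a - b) = a • ∫ t in Iic (w / a - b), g t := by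
  have hpre : ∀ y, (Iic w).indicator (fun y => g (y / a - b)) y
      = (Iic (w / a - b)).indicator g (y / a - b) := fun y => by
    simp only [indicator, mem_Iic, sub_le_sub_iff_right, div_le_div_iff_of_pos_right ha]
  rw [← integral_indicator measurableSet_Iic, ← integral_indicator measurableSet_Iic,
    funext hpre, Measure.integral_comp_div (fun t => (Iic (w / a - b)).indicator g (t - b)),
    integral_sub_right_eq_self, abs_of_pos ha]

lemma integral_comp_div_sub {E : Type*} [NormedAddCommGroup E] [NormedSpace ℝ E]
    (g : ℝ → E) {a : ℝ} (ha : 0 < a) (b : ℝ) :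
    ∫ y, g (y / a - b) = a • ∫ t, g t := by
  rw [Measure.integral_comp_div (fun t => g (t - b)), integral_sub_right_eq_self, abs_of_pos ha]

lemma integral_Ioi_mul_comp_div (h : ℝ → ℝ) {σ : ℝ} (hσ : 0 < σ) :
    ∫ x in Ioi 0, x * (σ⁻¹ * h (x / σ)) = σ * ∫ r in Ioi 0, r * h r := by
  have hsub := integral_comp_mul_left_Ioi (fun x => x * (σ⁻¹ * h (x / σ))) 0 hσ
  simp only [mul_zero, smul_eq_mul, mul_div_cancel_left₀ _ hσ.ne'] at hsub
  rw [eq_inv_mul_iff_mul_eq₀ hσ.ne'] at hsub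
  rw [← hsub]
  congr 1
  refine setIntegral_congr_fun measurableSet_Ioi fun r _ => ?_
  field_simp

lemma integral_Ioi_mul_exp_neg_sq_div_two : ∫ r in Ioi 0, r * exp (-r ^ 2 / 2) = 1 := by
  have hderiv : ∀ r ∈ Ici (0 : ℝ),
      HasDerivAt (fun r => -exp (-r ^ 2 / 2)) (r * exp (-r ^ 2 / 2)) r := fun r _ => by
    have hq : HasDerivAt (fun r : ℝ => -r ^ 2 / 2) (-r) r :=
      ((hasDerivAt_pow 2 r).neg.div_const 2).congr_deriv (by ring)
    exact hq.exp.neg.congr_deriv (by ring)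
  have hlim : Tendsto (fun r : ℝ => -exp (-r ^ 2 / 2)) atTop (𝓝 0) := by
    have := tendsto_exp_atBot.comp
      (tendsto_neg_atTop_atBot.comp ((tendsto_pow_atTop two_ne_zero).atTop_div_const two_pos))
    simpa [Function.comp_def, neg_div] using this.neg
  have hint : IntegrableOn (fun r => r * exp (-r ^ 2 / 2)) (Ioi 0) := by
    simpa [neg_div, div_eq_inv_mul] using
      (integrable_mul_exp_neg_mul_sq (b := 2⁻¹) (by norm_num)).integrableOn
  simpa using integral_Ioi_of_hasDerivAt_of_tendsto' hderiv hint hlim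

lemma bvnDensity_eq_mul {σX σY ρ : ℝ} (hX : 0 < σX) (hY : 0 < σY) (hρ : |ρ| < 1) (x y : ℝ) :
    bvnDensity σX σY ρ x y = (σX * (σY * √(1 - ρ ^ 2)))⁻¹ *
      (gaussianPDFReal 0 1 (x / σX) *
        gaussianPDFReal 0 1 (y / (σY * √(1 - ρ ^ 2)) - ρ * (x / σX) / √(1 - ρ ^ 2))) := by
  have hs : 0 < √(1 - ρ ^ 2) := sqrt_one_sub_sq_pos hρ
  have hs2 : √(1 - ρ ^ 2) ^ 2 = 1 - ρ ^ 2 := sq_sqrt (sqrt_pos.mp hs).le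
  rw [bvnDensity, gaussianPDFReal_zero_one, gaussianPDFReal_zero_one, mul_mul_mul_comm,
    ← exp_add, ← mul_assoc]
  set s := √(1 - ρ ^ 2)
  congr 1
  · field_simp
    exact sq_sqrt (by positivity)
  · congr 1
    rw [← hs2]
    field_simp
    linear_combination (x * σY) ^ 2 * hs2

lemma setIntegral_Iic_bvnDensity {σX σY ρ : ℝ} (hX : 0 < σX) (hY : 0 < σY) (hρ : |ρ| < 1)
    (x w : ℝ) :
    ∫ y in Iic w, bvnDensity σX σY ρ x y = σX⁻¹ * (gaussianPDFReal 0 1 (x / σX) *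
      stdNormalCDF ((w / σY - ρ * (x / σX)) / √(1 - ρ ^ 2))) := by
  have hs : 0 < √(1 - ρ ^ 2) := sqrt_one_sub_sq_pos hρ
  simp_rw [bvnDensity_eq_mul hX hY hρ, integral_const_mul,
    setIntegral_Iic_comp_div_sub _ (mul_pos hY hs), smul_eq_mul,
    ← stdNormalCDF_eq_setIntegral_gaussianPDFReal, sub_div, div_div]
  field_simp

lemma integral_bvnDensity {σX σY ρ : ℝ} (hX : 0 < σX) (hY : 0 < σY) (hρ : |ρ| < 1) (x : ℝ) :
    ∫ y, bvnDensity σX σY ρ x y = σX⁻¹ * gaussianPDFReal 0 1 (x / σX) := by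
  have hs : 0 < √(1 - ρ ^ 2) := sqrt_one_sub_sq_pos hρ
  simp_rw [bvnDensity_eq_mul hX hY hρ, integral_const_mul,
    integral_comp_div_sub _ (mul_pos hY hs), smul_eq_mul,
    integral_gaussianPDFReal_eq_one 0 one_ne_zero]
  field_simp

lemma integrable_abs_mul_gaussianPDFReal : Integrable fun r => |r| * gaussianPDFReal 0 1 r := by
  have h := ((integrable_mul_exp_neg_mul_sq (b := 2⁻¹) (by norm_num)).norm).const_mul (√(2 * π))⁻¹
  refine h.congr (Eventually.of_forall fun r => ?_)
  simp only [norm_mul, norm_eq_abs, abs_exp, gaussianPDFReal_zero_one]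
  ring_nf

lemma bvnDensity_nonneg {σX σY : ℝ} (hX : 0 < σX) (hY : 0 < σY) (ρ x y : ℝ) :
    0 ≤ bvnDensity σX σY ρ x y := by
  unfold bvnDensity
  positivity

lemma integrable_mul_bvnDensity {σX σY ρ : ℝ} (hX : 0 < σX) (hY : 0 < σY) (hρ : |ρ| < 1) :
    Integrable (fun p : ℝ × ℝ => p.1 * bvnDensity σX σY ρ p.1 p.2) (volume.prod volume) := by
  have hs : 0 < √(1 - ρ ^ 2) := sqrt_one_sub_sq_pos hρ
  have hcont : Continuous fun p : ℝ × ℝ => p.1 * bvnDensity σX σY ρ p.1 p.2 := by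
    unfold bvnDensity
    fun_prop
  refine (integrable_prod_iff hcont.aestronglyMeasurable).2 ⟨Eventually.of_forall fun x => ?_, ?_⟩
  · simp_rw [bvnDensity_eq_mul hX hY hρ]
    exact (((((integrable_gaussianPDFReal 0 1).comp_sub_right _).comp_div
      (mul_pos hY hs).ne').const_mul _).const_mul _).const_mul _
  · have hnorm : ∀ x, ∫ y, ‖x * bvnDensity σX σY ρ x y‖
        = |x / σX| * gaussianPDFReal 0 1 (x / σX) := by
      intro x
      simp_rw [norm_mul, norm_eq_abs, abs_of_nonneg (bvnDensity_nonneg hX hY ρ x _),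
        integral_const_mul, integral_bvnDensity hX hY hρ, abs_div, abs_of_pos hX]
      ring
    simp_rw [hnorm]
    exact integrable_abs_mul_gaussianPDFReal.comp_div hX.ne'

lemma setIntegral_Ioi_mul_bvnDensity_swap {σX σY ρ : ℝ} (hX : 0 < σX) (hY : 0 < σY)
    (hρ : |ρ| < 1) (S : Set ℝ) :
    ∫ y in S, ∫ x in Ioi 0, x * bvnDensity σX σY ρ x y
      = ∫ x in Ioi 0, x * ∫ y in S, bvnDensity σX σY ρ x y := by
  rw [integral_integral_swap]
  · simp_rw [integral_const_mul]
  · rw [Measure.prod_restrict]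
    exact (integrable_mul_bvnDensity hX hY hρ).swap.integrableOn

/-- The law is identified through its CDF: conditioning on `R⁺ = r`, the right-hand side is
`P(σY (ρ R⁺ + √(1-ρ²) U) ≤ w)`. -/
theorem stmt7 (σX σY ρ : ℝ) (hX : 0 < σX) (hY : 0 < σY) (hρ : |ρ| < 1) (w : ℝ) :
    (∫ y in Set.Iic w, ∫ x in Set.Ioi (0 : ℝ), x * bvnDensity σX σY ρ x y) /
      (∫ y : ℝ, ∫ x in Set.Ioi (0 : ℝ), x * bvnDensity σX σY ρ x y) =
      ∫ r in Set.Ioi (0 : ℝ),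
        r * Real.exp (-r ^ 2 / 2) *
          stdNormalCDF ((w / σY - ρ * r) / Real.sqrt (1 - ρ ^ 2)) := by
  have hnum : ∫ y in Iic w, ∫ x in Ioi 0, x * bvnDensity σX σY ρ x y = σX * (√(2 * π))⁻¹ *
      ∫ r in Ioi 0, r * exp (-r ^ 2 / 2) * stdNormalCDF ((w / σY - ρ * r) / √(1 - ρ ^ 2)) := by
    simp_rw [setIntegral_Ioi_mul_bvnDensity_swap hX hY hρ, setIntegral_Iic_bvnDensity hX hY hρ]
    rw [integral_Ioi_mul_comp_div
      (fun r => gaussianPDFReal 0 1 r * stdNormalCDF ((w / σY - ρ * r) / √(1 - ρ ^ 2))) hX,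
      mul_assoc, ← integral_const_mul (√(2 * π))⁻¹]
    congr 2 with r
    rw [gaussianPDFReal_zero_one]
    ring
  have hden : ∫ y, ∫ x in Ioi 0, x * bvnDensity σX σY ρ x y = σX * (√(2 * π))⁻¹ := by
    rw [← setIntegral_univ, setIntegral_Ioi_mul_bvnDensity_swap hX hY hρ]
    simp_rw [setIntegral_univ, integral_bvnDensity hX hY hρ, integral_Ioi_mul_comp_div _ hX,
      gaussianPDFReal_zero_one, mul_left_comm _ (√(2 * π))⁻¹]
    rw [integral_const_mul, integral_Ioi_mul_exp_neg_sq_div_two, mul_one]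
  rw [hnum, hden, mul_div_cancel_left₀ _ (by positivity)]
end

section
/- Let (X, T) be zero-mean jointly Gaussian with Var(X) = λ₂₀ > 0, Var(T) = λ₀₂, Cov(X, T) = λ₁₁, and λ₂₀λ₀₂ - λ₁₁² > 0. Define V = -T/X (on {X ≠ 0}) and the Palm distribution F_V(v) = E[X⁻·1{V ≤ v}]/E[X⁻]. Then F_V(v) = (1/2)(1 + (v - v̄)/√((v - v̄)² + σ²/λ₂₀)), where v̄ = -λ₁₁/λ₂₀ and σ² = λ₀₂ - λ₁₁²/λ₂₀. -/
open MeasureTheory Real Set Filter Topology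

/-! On `{x < 0}` the substitution `t = -x s` turns the numerator into
`∫_{s ≤ v} ∫_{x < 0} x² exp (-p(s) x²)` with `p(s) = A + 2 B s + E s²`, where
`A x² - 2 B x t + E t²` is the quadratic form of the density. After Fubini the inner
Gaussian moment is `√π / (4 p(s)^{3/2})`, and `p^{-3/2}` has the explicit primitive
`(E s + B) / ((A E - B²) √p(s))`, which tends to `-√E / (A E - B²)` at `-∞`. The denominator
is a Gaussian marginal followed by a first moment. -/

theorem integrableOn_Iic_deriv_of_nonneg' {g g' : ℝ → ℝ} {a l : ℝ}
    (hderiv : ∀ x ∈ Iic a, HasDerivAt g (g' x) x) (g'pos : ∀ x ∈ Iic a, 0 ≤ g' x)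
    (hg : Tendsto g atBot (𝓝 l)) : IntegrableOn g' (Iic a) := by
  have hcont : ContinuousOn g (Iic a) := fun x hx =>
    (hderiv x hx).continuousAt.continuousWithinAt
  have hint : ∀ x, IntegrableOn g' (Ioc x a) := fun x =>
    intervalIntegral.integrableOn_deriv_of_nonneg (hcont.mono Icc_subset_Iic_self)
      (fun y hy => hderiv y hy.2.le) fun y hy => g'pos y hy.2.le
  refine integrableOn_Iic_of_intervalIntegral_norm_tendsto (g a - l) a hint tendsto_id ?_
  refine (hg.const_sub (g a)).congr' ?_
  filter_upwards [Iic_mem_atBot a] with x hx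
  rw [← intervalIntegral.integral_eq_sub_of_hasDerivAt_of_le hx
    (hcont.mono Icc_subset_Iic_self) (fun y hy => hderiv y hy.2.le)
    ((intervalIntegrable_iff_integrableOn_Ioc_of_le hx).2 (hint x))]
  refine intervalIntegral.integral_congr fun y hy => ?_
  rw [uIcc_of_le hx] at hy
  exact (norm_of_nonneg (g'pos y hy.2)).symm

theorem integral_Iic_mul_left {F : Type*} [NormedAddCommGroup F] [NormedSpace ℝ F]
    (g : ℝ → F) {R : ℝ} (hR : 0 < R) (v : ℝ) :
    ∫ t in Iic (R * v), g t = R • ∫ s in Iic v, g (R * s) := by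
  have h := Measure.setIntegral_comp_smul_of_pos (μ := volume) g (Iic v) hR
  rw [LinearOrderedField.smul_Iic hR] at h
  simp only [smul_eq_mul, Module.finrank_self, pow_one] at h
  rw [h, smul_smul, mul_inv_cancel₀ hR.ne', one_smul]

theorem integral_Iio_zero_eq_integral_Ioi_zero_comp_neg {F : Type*} [NormedAddCommGroup F]
    [NormedSpace ℝ F] (f : ℝ → F) : ∫ x in Iio 0, f x = ∫ x in Ioi 0, f (-x) := by
  rw [integral_comp_neg_Ioi, neg_zero, integral_Iic_eq_integral_Iio]

theorem integral_Iio_zero_neg_mul_exp_neg_mul_sq {b : ℝ} (hb : 0 < b) :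
    ∫ x in Iio 0, -x * exp (-b * x ^ 2) = (2 * b)⁻¹ := by
  have h := integral_rpow_mul_exp_neg_mul_rpow two_pos (by norm_num : (-1 : ℝ) < 1) hb
  simp only [rpow_one, rpow_two] at h
  rw [integral_Iio_zero_eq_integral_Ioi_zero_comp_neg]
  simp only [neg_neg, neg_sq, h]
  norm_num [rpow_neg_one]

theorem integral_Iio_zero_sq_mul_exp_neg_mul_sq {b : ℝ} (hb : 0 < b) :
    ∫ x in Iio 0, x ^ 2 * exp (-b * x ^ 2) = √π / (4 * (b * √b)) := by
  have h := integral_rpow_mul_exp_neg_mul_rpow two_pos (by norm_num : (-1 : ℝ) < 2) hb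
  have hΓ : Gamma (3 / 2) = √π / 2 := by
    rw [show (3 / 2 : ℝ) = 1 / 2 + 1 by norm_num, Gamma_add_one (by norm_num), Gamma_one_half_eq]
    ring
  have hpow : b ^ (-(3 / 2) : ℝ) = (b * √b)⁻¹ := by
    rw [rpow_neg hb.le, show (3 / 2 : ℝ) = 1 + 1 / 2 by norm_num, rpow_add hb, rpow_one,
      sqrt_eq_rpow]
  simp only [rpow_two] at h
  rw [integral_Iio_zero_eq_integral_Ioi_zero_comp_neg]
  simp only [neg_sq, h]
  norm_num [hΓ, hpow]
  ring

theorem integral_exp_neg_quadratic {A B E : ℝ} (hE : 0 < E) (x : ℝ) :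
    ∫ t, exp (-(A * x ^ 2 - 2 * B * x * t + E * t ^ 2)) =
      √(π / E) * exp (-((A * E - B ^ 2) / E) * x ^ 2) := by
  have hsq : ∀ t, -(A * x ^ 2 - 2 * B * x * t + E * t ^ 2) =
      -((A * E - B ^ 2) / E) * x ^ 2 + -E * (t - B * x / E) ^ 2 := fun t => by
    field_simp
    ring
  simp_rw [hsq, exp_add, integral_const_mul, integral_sub_right_eq_self
    (fun t => exp (-E * t ^ 2)), integral_gaussian, mul_comm]

theorem tendsto_div_sqrt_sq_add_atBot (c : ℝ) :
    Tendsto (fun u : ℝ => u / √(u ^ 2 + c)) atBot (𝓝 (-1)) := by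
  have hsq : Tendsto (fun u : ℝ => u ^ 2 + c) atBot atTop :=
    tendsto_atTop_add_const_right _ c
      (tendsto_id.atBot_mul_atBot₀ tendsto_id |>.congr fun u => (sq u).symm)
  have hlim : Tendsto (fun u : ℝ => -√(1 - c / (u ^ 2 + c))) atBot (𝓝 (-1)) := by
    simpa using ((hsq.const_div_atTop c).const_sub 1).sqrt.neg
  refine hlim.congr' ?_
  filter_upwards [eventually_lt_atBot 0, hsq.eventually_gt_atTop 0] with u hu hpos
  rw [one_sub_div hpos.ne', add_sub_cancel_right, sqrt_div' _ hpos.le, sqrt_sq_eq_abs,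
    abs_of_neg hu, neg_div, neg_neg]

section Quadratic

variable {A B E : ℝ}

theorem quadratic_pos (hE : 0 < E) (hΔ : 0 < A * E - B ^ 2) (s : ℝ) :
    0 < A + 2 * B * s + E * s ^ 2 := by
  have : 0 < E * (A + 2 * B * s + E * s ^ 2) := by nlinarith [sq_nonneg (E * s + B)]
  exact pos_of_mul_pos_right this hE.le

theorem hasDerivAt_div_sqrt_quadratic {s : ℝ} (hs : 0 < A + 2 * B * s + E * s ^ 2) :
    HasDerivAt (fun s => (E * s + B) / √(A + 2 * B * s + E * s ^ 2))
      ((A * E - B ^ 2) / ((A + 2 * B * s + E * s ^ 2) * √(A + 2 * B * s + E * s ^ 2))) s := by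
  have hp : HasDerivAt (fun s => A + 2 * B * s + E * s ^ 2) (2 * (E * s + B)) s :=
    (((hasDerivAt_id s).const_mul (2 * B)).const_add A).add
      ((hasDerivAt_pow 2 s).const_mul E) |>.congr_deriv
        (by simp only [mul_one, Nat.cast_ofNat, Nat.add_one_sub_one, pow_one]; ring)
  have hlin : HasDerivAt (fun s => E * s + B) E s :=
    ((hasDerivAt_id s).const_mul E).add_const B |>.congr_deriv (mul_one E)
  refine (hlin.div (hp.sqrt hs.ne') (sqrt_pos.2 hs).ne').congr_deriv ?_
  have := (sqrt_pos.2 hs).ne'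
  field_simp
  rw [sq_sqrt hs.le]
  ring

theorem tendsto_div_sqrt_quadratic_atBot (hE : 0 < E) :
    Tendsto (fun s => (E * s + B) / √(A + 2 * B * s + E * s ^ 2)) atBot (𝓝 (-√E)) := by
  have hu : Tendsto (fun s => E * s + B) atBot atBot :=
    tendsto_atBot_add_const_right _ B (tendsto_id.const_mul_atBot hE)
  have h := ((tendsto_div_sqrt_sq_add_atBot (A * E - B ^ 2)).comp hu).const_mul √E
  rw [mul_neg_one] at h
  refine h.congr fun s => ?_
  have : A + 2 * B * s + E * s ^ 2 = ((E * s + B) ^ 2 + (A * E - B ^ 2)) / E := by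
    field_simp
    ring
  rw [Function.comp_apply, this, sqrt_div' _ hE.le]
  field_simp

theorem hasDerivAt_div_sqrt_quadratic_div (hE : 0 < E) (hΔ : 0 < A * E - B ^ 2) (s : ℝ) :
    HasDerivAt (fun s => (E * s + B) / √(A + 2 * B * s + E * s ^ 2) / (A * E - B ^ 2))
      ((A + 2 * B * s + E * s ^ 2) * √(A + 2 * B * s + E * s ^ 2))⁻¹ s :=
  (hasDerivAt_div_sqrt_quadratic (quadratic_pos hE hΔ s)).div_const _ |>.congr_deriv
    (by field_simp)

theorem integrableOn_Iic_inv_mul_sqrt_quadratic (hE : 0 < E) (hΔ : 0 < A * E - B ^ 2) (v : ℝ) :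
    IntegrableOn (fun s => ((A + 2 * B * s + E * s ^ 2) * √(A + 2 * B * s + E * s ^ 2))⁻¹)
      (Iic v) :=
  integrableOn_Iic_deriv_of_nonneg' (fun s _ => hasDerivAt_div_sqrt_quadratic_div hE hΔ s)
    (fun s _ => by have := quadratic_pos hE hΔ s; positivity)
    ((tendsto_div_sqrt_quadratic_atBot hE).div_const _)

theorem integral_Iic_inv_mul_sqrt_quadratic (hE : 0 < E) (hΔ : 0 < A * E - B ^ 2) (v : ℝ) :
    ∫ s in Iic v, ((A + 2 * B * s + E * s ^ 2) * √(A + 2 * B * s + E * s ^ 2))⁻¹ =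
      ((E * v + B) / √(A + 2 * B * v + E * v ^ 2) + √E) / (A * E - B ^ 2) := by
  rw [integral_Iic_of_hasDerivAt_of_tendsto'
    (fun s _ => hasDerivAt_div_sqrt_quadratic_div hE hΔ s)
    (integrableOn_Iic_inv_mul_sqrt_quadratic hE hΔ v)
    ((tendsto_div_sqrt_quadratic_atBot hE).div_const _)]
  ring

end Quadratic

theorem integral_Iio_zero_integral_sq_mul_exp_neg_mul_sq {p : ℝ → ℝ} {S : Set ℝ}
    (hp : Continuous p) (hpos : ∀ s, 0 < p s)
    (hint : IntegrableOn (fun s => (p s * √(p s))⁻¹) S) :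
    ∫ x in Iio 0, ∫ s in S, x ^ 2 * exp (-p s * x ^ 2) =
      √π / 4 * ∫ s in S, (p s * √(p s))⁻¹ := by
  have hinner : ∀ s, ∫ x in Iio 0, x ^ 2 * exp (-p s * x ^ 2) = √π / 4 * (p s * √(p s))⁻¹ :=
    fun s => by rw [integral_Iio_zero_sq_mul_exp_neg_mul_sq (hpos s)]; ring
  have hF : Integrable (Function.uncurry fun x s => x ^ 2 * exp (-p s * x ^ 2))
      ((volume.restrict (Iio 0)).prod (volume.restrict S)) := by
    refine (integrable_prod_iff' (Continuous.aestronglyMeasurable (by fun_prop))).2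
      ⟨Eventually.of_forall fun s => ?_, ?_⟩
    · refine (integrable_rpow_mul_exp_neg_mul_sq (hpos s) (by norm_num : (-1 : ℝ) < 2))
        |>.integrableOn.congr_fun (fun x _ => ?_) measurableSet_Iio
      simp only [Function.uncurry_apply_pair, rpow_ofNat]
    · refine (hint.const_mul (√π / 4)).congr (Eventually.of_forall fun s => ?_)
      have hnonneg : ∀ x, 0 ≤ x ^ 2 * exp (-p s * x ^ 2) := fun x => by positivity
      simp only [Function.uncurry_apply_pair, norm_of_nonneg (hnonneg _)]
      exact (hinner s).symm
  rw [integral_integral_swap hF]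
  simp_rw [hinner]
  exact integral_const_mul _ _

/-- For a joint density `f` of `(X, T)`, the Palm distribution function of `V = -T / X` at wave
centres: on `{x < 0}` one has `X⁻ = -x`, and `-t / x ≤ v` iff `t ≤ -v x`. -/
noncomputable def palmVelocityCDF (f : ℝ → ℝ → ℝ) (v : ℝ) : ℝ :=
  (∫ x in Iio 0, -x * ∫ t in Iic (-v * x), f x t) / ∫ x in Iio 0, -x * ∫ t, f x t

theorem palmVelocityCDF_const_mul {c : ℝ} (hc : c ≠ 0) (f : ℝ → ℝ → ℝ) (v : ℝ) :
    palmVelocityCDF (fun x t => c * f x t) v = palmVelocityCDF f v := by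
  simp_rw [palmVelocityCDF, integral_const_mul, mul_left_comm (-_) c, integral_const_mul]
  exact mul_div_mul_left _ _ hc

section PalmVelocity

variable {A B E : ℝ}

theorem integral_Iio_zero_neg_mul_integral_exp_neg_quadratic (hE : 0 < E)
    (hΔ : 0 < A * E - B ^ 2) :
    ∫ x in Iio 0, -x * ∫ t, exp (-(A * x ^ 2 - 2 * B * x * t + E * t ^ 2)) =
      √(π / E) * E / (2 * (A * E - B ^ 2)) := by
  simp_rw [integral_exp_neg_quadratic hE, mul_left_comm (-_) (√(π / E)), integral_const_mul,
    integral_Iio_zero_neg_mul_exp_neg_mul_sq (div_pos hΔ hE)]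
  field_simp

theorem integral_Iio_zero_neg_mul_integral_Iic_exp_neg_quadratic (hE : 0 < E)
    (hΔ : 0 < A * E - B ^ 2) (v : ℝ) :
    ∫ x in Iio 0, -x * ∫ t in Iic (-v * x), exp (-(A * x ^ 2 - 2 * B * x * t + E * t ^ 2)) =
      √π / 4 * (((E * v + B) / √(A + 2 * B * v + E * v ^ 2) + √E) / (A * E - B ^ 2)) := by
  have hsubst : ∀ x ∈ Iio (0 : ℝ),
      -x * ∫ t in Iic (-v * x), exp (-(A * x ^ 2 - 2 * B * x * t + E * t ^ 2)) =
        ∫ s in Iic v, x ^ 2 * exp (-(A + 2 * B * s + E * s ^ 2) * x ^ 2) := fun x hx => by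
    rw [show -v * x = -x * v by ring, integral_Iic_mul_left _ (neg_pos.2 hx), smul_eq_mul,
      ← mul_assoc, neg_mul_neg, ← sq, ← integral_const_mul]
    congr with s
    ring_nf
  rw [setIntegral_congr_fun measurableSet_Iio hsubst,
    integral_Iio_zero_integral_sq_mul_exp_neg_mul_sq (by fun_prop) (quadratic_pos hE hΔ)
      (integrableOn_Iic_inv_mul_sqrt_quadratic hE hΔ v),
    integral_Iic_inv_mul_sqrt_quadratic hE hΔ]

theorem palmVelocityCDF_exp_neg_quadratic (hE : 0 < E) (hΔ : 0 < A * E - B ^ 2) (v : ℝ) :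
    palmVelocityCDF (fun x t => exp (-(A * x ^ 2 - 2 * B * x * t + E * t ^ 2))) v =
      1 / 2 * (1 + (E * v + B) / √(E * (A + 2 * B * v + E * v ^ 2))) := by
  rw [palmVelocityCDF, integral_Iio_zero_neg_mul_integral_Iic_exp_neg_quadratic hE hΔ,
    integral_Iio_zero_neg_mul_integral_exp_neg_quadratic hE hΔ, sqrt_div' _ hE.le,
    sqrt_mul hE.le]
  have := sqrt_pos.2 hE
  have := sqrt_pos.2 (quadratic_pos hE hΔ v)
  have := sqrt_pos.2 pi_pos
  generalize A * E - B ^ 2 = Δ at hΔ ⊢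
  have := hΔ.ne'
  field_simp
  rw [sq_sqrt hE.le]
  ring

end PalmVelocity

/-- The distribution of wave velocities (Section 4). Let `(X,T)` be zero-mean jointly
Gaussian with `Var X = λ₂₀`, `Var T = λ₀₂`, `Cov(X,T) = λ₁₁` and joint density
`f(x,t) = (2π√D)⁻¹ exp(-(λ₀₂x² - 2λ₁₁xt + λ₂₀t²)/(2D))`, `D = λ₂₀λ₀₂ - λ₁₁²`.
With `V = -T/X`, the Palm distribution `F_V(v) = E[X⁻·1{V ≤ v}]/E[X⁻]` equals
`(1/2)(1 + (v - v̄)/√((v - v̄)² + σ²/λ₂₀))` with `v̄ = -λ₁₁/λ₂₀`, `σ² = λ₀₂ - λ₁₁²/λ₂₀`.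
On `{x < 0}`, `X⁻ = -x` and the event `{-t/x ≤ v}` is `{t ≤ -v·x}`. -/
theorem stmt11 (l20 l02 l11 v : ℝ) (h20 : 0 < l20) (hD : 0 < l20 * l02 - l11 ^ 2) :
    (∫ x in Set.Iio (0 : ℝ), (-x) *
        ∫ t in Set.Iic (-v * x),
          (2 * Real.pi * Real.sqrt (l20 * l02 - l11 ^ 2))⁻¹ *
            Real.exp (-(l02 * x ^ 2 - 2 * l11 * x * t + l20 * t ^ 2) /
              (2 * (l20 * l02 - l11 ^ 2)))) /
      (∫ x in Set.Iio (0 : ℝ), (-x) *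
        ∫ t : ℝ,
          (2 * Real.pi * Real.sqrt (l20 * l02 - l11 ^ 2))⁻¹ *
            Real.exp (-(l02 * x ^ 2 - 2 * l11 * x * t + l20 * t ^ 2) /
              (2 * (l20 * l02 - l11 ^ 2)))) =
      (1 / 2) * (1 + (v - (-l11 / l20)) /
        Real.sqrt ((v - (-l11 / l20)) ^ 2 + (l02 - l11 ^ 2 / l20) / l20)) := by
  set D := l20 * l02 - l11 ^ 2
  have hE : 0 < l20 / (2 * D) := by positivity
  have hΔ : 0 < l02 / (2 * D) * (l20 / (2 * D)) - (l11 / (2 * D)) ^ 2 := by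
    have : l02 / (2 * D) * (l20 / (2 * D)) - (l11 / (2 * D)) ^ 2 = (4 * D)⁻¹ := by
      field_simp
      ring
    rw [this]
    positivity
  have hq : ∀ x t, -(l02 * x ^ 2 - 2 * l11 * x * t + l20 * t ^ 2) / (2 * D) =
      -(l02 / (2 * D) * x ^ 2 - 2 * (l11 / (2 * D)) * x * t + l20 / (2 * D) * t ^ 2) :=
    fun x t => by ring
  have hsq : l20 / (2 * D) * (l02 / (2 * D) + 2 * (l11 / (2 * D)) * v + l20 / (2 * D) * v ^ 2) =
      (l20 / (2 * D)) ^ 2 * ((v - -l11 / l20) ^ 2 + (l02 - l11 ^ 2 / l20) / l20) := by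
    field_simp
    ring
  have hC : (2 * π * √D)⁻¹ ≠ 0 := by have := sqrt_pos.2 hD; positivity
  change palmVelocityCDF (fun x t => _) v = _
  simp_rw [palmVelocityCDF_const_mul hC, hq, palmVelocityCDF_exp_neg_quadratic hE hΔ, hsq,
    sqrt_mul (sq_nonneg _), sqrt_sq hE.le]
  field_simp
  ring
end

section
/- Let R⁺ be Rayleigh (density r e^{-r²/2}, r > 0) and U standard normal, independent, and let ρ ∈ (-1, 1), λ > 0. Define Y = √λ(ρR⁺ + √(1-ρ²)U). Then for w < 0, P(Y ≤ w)/P(Y < 0) = (2/(1-ρ))·(Φ(w/√(λ(1-ρ²))) - ρ·e^{-w²/(2λ)}·Φ(ρw/√(λ(1-ρ²)))). -/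
/-!
Conditioning on `R⁺ = r`, the probabilities are integrals
`∫₀^∞ r e^{-r²/2} Φ((a - ρr)/σ) dr` with `σ = √(1-ρ²)` and `a = w/√λ` (resp. `a = 0`).
Integrating by parts against `-e^{-r²/2}` leaves `(ρ/σ) ∫₀^∞ e^{-r²/2} φ((a - ρr)/σ) dr`, and
since `ρ² + σ² = 1`, completing the square turns that integrand into `e^{-a²/2} φ((r - ρa)/σ)`,
whose integral over `r > 0` is `σ e^{-a²/2} Φ(ρa/σ)`. Hence the integral equals
`Φ(a/σ) - ρ e^{-a²/2} Φ(ρa/σ)`, which is `(1 - ρ)/2` at `a = 0`.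
-/

open MeasureTheory Real Set

open Filter Topology ProbabilityTheory

local notation "φ" => gaussianPDFReal 0 1

lemma gaussianPDFReal_zero_one_apply (t : ℝ) : φ t = (√(2 * π))⁻¹ * exp (-t ^ 2 / 2) := by
  simp [gaussianPDFReal]

lemma continuous_gaussianPDFReal_zero_one : Continuous φ := by
  simp_rw [funext gaussianPDFReal_zero_one_apply]
  fun_prop

lemma stdNormalCDF_eq_integral (x : ℝ) : stdNormalCDF x = ∫ t in Iic x, φ t := by
  simp_rw [gaussianPDFReal_zero_one_apply, stdNormalCDF]

lemma abs_stdNormalCDF_le_one (x : ℝ) : |stdNormalCDF x| ≤ 1 := by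
  rw [stdNormalCDF_eq_integral, abs_of_nonneg
    (setIntegral_nonneg measurableSet_Iic fun t _ => gaussianPDFReal_nonneg 0 1 t),
    ← integral_gaussianPDFReal_eq_one 0 one_ne_zero]
  exact setIntegral_le_integral (integrable_gaussianPDFReal 0 1)
    (Eventually.of_forall (gaussianPDFReal_nonneg 0 1))

lemma hasDerivAt_stdNormalCDF_s12 (x : ℝ) : HasDerivAt stdNormalCDF (φ x) x := by
  have hφ := integrable_gaussianPDFReal 0 1
  have hsplit : ∀ y, stdNormalCDF y = stdNormalCDF 0 + ∫ t in (0 : ℝ)..y, φ t := fun y => by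
    rw [stdNormalCDF_eq_integral, stdNormalCDF_eq_integral,
      ← intervalIntegral.integral_Iic_sub_Iic hφ.integrableOn hφ.integrableOn]
    ring
  rw [funext hsplit]
  exact (intervalIntegral.integral_hasDerivAt_right hφ.intervalIntegrable
    (stronglyMeasurable_gaussianPDFReal 0 1).stronglyMeasurableAtFilter
    continuous_gaussianPDFReal_zero_one.continuousAt).const_add _

lemma continuous_stdNormalCDF : Continuous stdNormalCDF :=
  continuous_iff_continuousAt.2 fun x => (hasDerivAt_stdNormalCDF_s12 x).continuousAt

lemma tendsto_stdNormalCDF_atTop : Tendsto stdNormalCDF atTop (𝓝 1) := by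
  have h := (aecover_Iic tendsto_id).integral_tendsto_of_countably_generated
    (integrable_gaussianPDFReal 0 1)
  rw [integral_gaussianPDFReal_eq_one 0 one_ne_zero] at h
  simpa only [id, ← stdNormalCDF_eq_integral] using h

lemma stdNormalCDF_neg_s12 (x : ℝ) : stdNormalCDF (-x) = 1 - stdNormalCDF x := by
  have hφ := integrable_gaussianPDFReal 0 1
  have hreflect : stdNormalCDF (-x) = ∫ t in Ioi x, φ t := by
    rw [stdNormalCDF_eq_integral, ← integral_comp_neg_Ioi]
    refine setIntegral_congr_fun measurableSet_Ioi fun t _ => ?_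
    rw [gaussianPDFReal_zero_one_apply, gaussianPDFReal_zero_one_apply, neg_sq]
  have htotal := setIntegral_union (Iic_disjoint_Ioi (le_refl x)) measurableSet_Ioi
    hφ.integrableOn hφ.integrableOn (μ := volume) (f := φ)
  rw [Iic_union_Ioi, setIntegral_univ, integral_gaussianPDFReal_eq_one 0 one_ne_zero] at htotal
  rw [hreflect, stdNormalCDF_eq_integral]
  linarith

lemma stdNormalCDF_zero : stdNormalCDF 0 = 1 / 2 := by
  linarith [neg_zero (G := ℝ) ▸ stdNormalCDF_neg_s12 0]

lemma integral_Ioi_gaussianPDFReal_comp_div {σ : ℝ} (hσ : 0 < σ) (m : ℝ) :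
    ∫ r in Ioi 0, φ ((r - m) / σ) = σ * stdNormalCDF (m / σ) := by
  have hderiv : ∀ r ∈ Ici (0 : ℝ),
      HasDerivAt (fun r => σ * stdNormalCDF ((r - m) / σ)) (φ ((r - m) / σ)) r := by
    intro r _
    refine (((hasDerivAt_stdNormalCDF_s12 _).comp r
      (((hasDerivAt_id r).sub_const m).div_const σ)).const_mul σ).congr_deriv ?_
    field_simp
    rfl
  have hint : Integrable fun r => φ ((r - m) / σ) :=
    ((integrable_gaussianPDFReal 0 1).comp_div hσ.ne').comp_sub_right m
  have hlim : Tendsto (fun r => σ * stdNormalCDF ((r - m) / σ)) atTop (𝓝 (σ * 1)) :=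
    (tendsto_stdNormalCDF_atTop.comp
      ((tendsto_atTop_add_const_right _ (-m) tendsto_id).atTop_div_const hσ)).const_mul σ
  rw [integral_Ioi_of_hasDerivAt_of_tendsto' hderiv hint.integrableOn hlim, zero_sub, neg_div,
    stdNormalCDF_neg_s12]
  ring

section Rotation

variable {ρ σ : ℝ}

lemma exp_mul_gaussianPDFReal_rotate (hσ : σ ≠ 0) (hρσ : ρ ^ 2 + σ ^ 2 = 1) (a r : ℝ) :
    exp (-r ^ 2 / 2) * φ ((a - ρ * r) / σ) = exp (-a ^ 2 / 2) * φ ((r - ρ * a) / σ) := by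
  simp only [gaussianPDFReal_zero_one_apply, mul_left_comm (exp _), ← exp_add]
  congr 2
  field_simp
  linear_combination (a ^ 2 - r ^ 2) * hρσ

lemma integral_Ioi_exp_mul_gaussianPDFReal (hσ : 0 < σ) (hρσ : ρ ^ 2 + σ ^ 2 = 1) (a : ℝ) :
    ∫ r in Ioi 0, exp (-r ^ 2 / 2) * φ ((a - ρ * r) / σ)
      = σ * exp (-a ^ 2 / 2) * stdNormalCDF (ρ * a / σ) := by
  simp_rw [exp_mul_gaussianPDFReal_rotate hσ.ne' hρσ a]
  rw [integral_const_mul, integral_Ioi_gaussianPDFReal_comp_div hσ]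
  ring

lemma integral_Ioi_mul_exp_mul_stdNormalCDF (hσ : 0 < σ) (hρσ : ρ ^ 2 + σ ^ 2 = 1) (a : ℝ) :
    ∫ r in Ioi 0, r * exp (-r ^ 2 / 2) * stdNormalCDF ((a - ρ * r) / σ)
      = stdNormalCDF (a / σ) - ρ * exp (-a ^ 2 / 2) * stdNormalCDF (ρ * a / σ) := by
  set Φa : ℝ → ℝ := fun r => stdNormalCDF ((a - ρ * r) / σ)
  have hΦa_bdd : ∀ r, ‖Φa r‖ ≤ 1 := fun r => abs_stdNormalCDF_le_one _
  have hderiv : ∀ r ∈ Ici (0 : ℝ), HasDerivAt (fun r => -(exp (-r ^ 2 / 2) * Φa r))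
      (r * exp (-r ^ 2 / 2) * Φa r + ρ / σ * (exp (-r ^ 2 / 2) * φ ((a - ρ * r) / σ))) r := by
    intro r _
    have hexp : HasDerivAt (fun r => exp (-r ^ 2 / 2)) (exp (-r ^ 2 / 2) * (-r)) r := by
      refine ((hasDerivAt_pow 2 r).neg.div_const 2).exp.congr_deriv ?_
      simp only [Pi.neg_apply]
      ring
    have hΦ : HasDerivAt Φa (φ ((a - ρ * r) / σ) * (-ρ / σ)) r := by
      refine (hasDerivAt_stdNormalCDF_s12 _).comp r ?_
      simpa using (((hasDerivAt_id r).const_mul ρ).const_sub a).div_const σ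
    refine (hexp.mul hΦ).neg.congr_deriv ?_
    ring
  have hint₁ : Integrable fun r => r * exp (-r ^ 2 / 2) * Φa r := by
    refine Integrable.mul_bdd ?_ (continuous_stdNormalCDF.comp (by fun_prop)).aestronglyMeasurable
      (Eventually.of_forall hΦa_bdd)
    convert integrable_mul_exp_neg_mul_sq (b := 1 / 2) one_half_pos using 4
    ring
  have hint₂ : Integrable fun r => exp (-r ^ 2 / 2) * φ ((a - ρ * r) / σ) := by
    simp_rw [exp_mul_gaussianPDFReal_rotate hσ.ne' hρσ a]
    exact (((integrable_gaussianPDFReal 0 1).comp_div hσ.ne').comp_sub_right _).const_mul _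
  have hlim : Tendsto (fun r => -(exp (-r ^ 2 / 2) * Φa r)) atTop (𝓝 0) := by
    have hexp : Tendsto (fun r : ℝ => exp (-r ^ 2 / 2)) atTop (𝓝 0) :=
      tendsto_exp_atBot.comp
        ((tendsto_neg_atTop_atBot.comp (tendsto_pow_atTop two_ne_zero)).atBot_div_const two_pos)
    simpa using (hexp.zero_mul_isBoundedUnder_le (isBoundedUnder_of ⟨1, hΦa_bdd⟩)).neg
  have hFTC := integral_Ioi_of_hasDerivAt_of_tendsto' hderiv
    (hint₁.add (hint₂.const_mul _)).integrableOn hlim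
  rw [integral_add hint₁.integrableOn (hint₂.const_mul _).integrableOn, integral_const_mul,
    integral_Ioi_exp_mul_gaussianPDFReal hσ hρσ] at hFTC
  norm_num [Φa] at hFTC
  have hcancel : ρ / σ * (σ * exp (-a ^ 2 / 2) * stdNormalCDF (ρ * a / σ))
      = ρ * exp (-a ^ 2 / 2) * stdNormalCDF (ρ * a / σ) := by
    field_simp
  linarith

end Rotation

theorem stmt12_general (ρ lam w : ℝ) (hρ₁ : -1 < ρ) (hρ₂ : ρ < 1) (hlam : 0 < lam) :
    (∫ r in Set.Ioi (0 : ℝ),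
        r * Real.exp (-r ^ 2 / 2) *
          stdNormalCDF ((w / Real.sqrt lam - ρ * r) / Real.sqrt (1 - ρ ^ 2))) /
      (∫ r in Set.Ioi (0 : ℝ),
        r * Real.exp (-r ^ 2 / 2) *
          stdNormalCDF ((0 - ρ * r) / Real.sqrt (1 - ρ ^ 2))) =
      (2 / (1 - ρ)) *
        (stdNormalCDF (w / Real.sqrt (lam * (1 - ρ ^ 2))) -
          ρ * Real.exp (-w ^ 2 / (2 * lam)) *
            stdNormalCDF (ρ * w / Real.sqrt (lam * (1 - ρ ^ 2)))) := by
  have h1ρ2 : 0 < 1 - ρ ^ 2 := by nlinarith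
  have hσ : 0 < √(1 - ρ ^ 2) := sqrt_pos.2 h1ρ2
  have hρσ : ρ ^ 2 + √(1 - ρ ^ 2) ^ 2 = 1 := by rw [sq_sqrt h1ρ2.le]; ring
  have hprob_neg : ∫ r in Ioi 0, r * exp (-r ^ 2 / 2) * stdNormalCDF ((0 - ρ * r) / √(1 - ρ ^ 2))
      = (1 - ρ) / 2 := by
    rw [integral_Ioi_mul_exp_mul_stdNormalCDF hσ hρσ]
    norm_num [stdNormalCDF_zero]
    ring
  have hscale : √lam * √(1 - ρ ^ 2) = √(lam * (1 - ρ ^ 2)) := (sqrt_mul hlam.le _).symm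
  rw [hprob_neg, integral_Ioi_mul_exp_mul_stdNormalCDF hσ hρσ, div_div, hscale, mul_div_assoc,
    div_div, hscale, div_pow, sq_sqrt hlam.le]
  have h1ρ : 1 - ρ ≠ 0 := by linarith
  field_simp

/-- Formula (6.6): for `Y = √λ(ρR⁺ + √(1-ρ²)U)` with `R⁺` Rayleigh and `U` standard
normal independent, and `w < 0`,
`P(Y ≤ w)/P(Y < 0) = (2/(1-ρ))·(Φ(w/√(λ(1-ρ²))) - ρ·e^{-w²/(2λ)}·Φ(ρw/√(λ(1-ρ²))))`.
Conditioning on `R⁺ = r` gives `P(Y ≤ w) = ∫_0^∞ r e^{-r²/2} Φ((w/√λ - ρr)/√(1-ρ²)) dr`,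
and similarly for `P(Y < 0)` (taking `w = 0`, the distribution being continuous). -/
theorem stmt12 (ρ lam w : ℝ) (hρ₁ : -1 < ρ) (hρ₂ : ρ < 1) (hlam : 0 < lam)
    (hw : w < 0) :
    (∫ r in Set.Ioi (0 : ℝ),
        r * Real.exp (-r ^ 2 / 2) *
          stdNormalCDF ((w / Real.sqrt lam - ρ * r) / Real.sqrt (1 - ρ ^ 2))) /
      (∫ r in Set.Ioi (0 : ℝ),
        r * Real.exp (-r ^ 2 / 2) *
          stdNormalCDF ((0 - ρ * r) / Real.sqrt (1 - ρ ^ 2))) =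
      (2 / (1 - ρ)) *
        (stdNormalCDF (w / Real.sqrt (lam * (1 - ρ ^ 2))) -
          ρ * Real.exp (-w ^ 2 / (2 * lam)) *
            stdNormalCDF (ρ * w / Real.sqrt (lam * (1 - ρ ^ 2)))) :=
  stmt12_general ρ lam w hρ₁ hρ₂ hlam
end
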